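/- The inner product similarity of block-wise RoPE-encoded tokens depends only on relative position: for Q, K ∈ ℝ^d (d even), ⟨R_d(Q, p), R_d(K, p')⟩ = ⟨R_d(Q, p − p'), K⟩, where R_d applies rotation by angle pθ_i to the i-th 2D slice. -/
import Mathlib


open Real

/-- Rotation of a 2D vector (a pair) by angle `φ`. -/
noncomputable def rot2 (φ : ℝ) (q : ℝ × ℝ) : ℝ × ℝ :=
  (Real.cos φ * q.1 - Real.sin φ * q.2, Real.sin φ * q.1 + Real.cos φ * q.2)

/-- Euclidean inner product of a pair of 2D vectors. -/
def dot2 (a b : ℝ × ℝ) : ℝ := a.1 * b.1 + a.2 * b.2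

/-- Block-wise rotary embedding with frequencies `θ`: rotate the `i`-th
consecutive 2D slice of a token (represented as `m` pairs, `d = 2m`) by
angle `p · θ_i`. -/
noncomputable def ropeBlock (m : ℕ) (θ : Fin m → ℝ) (Q : Fin m → ℝ × ℝ) (p : ℝ) :
    Fin m → ℝ × ℝ :=
  fun i => rot2 (p * θ i) (Q i)

/-- The Euclidean inner product of block-wise RoPE-encoded tokens depends only
on the relative position: `⟨R_d(Q, p), R_d(K, p')⟩ = ⟨R_d(Q, p − p'), K⟩`. -/
theorem ropeBlock_inner_relative (m : ℕ) (θ : Fin m → ℝ) (hθ : ∀ i, 0 < θ i)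
    (Q K : Fin m → ℝ × ℝ) (p p' : ℝ) :
    (∑ i, dot2 (ropeBlock m θ Q p i) (ropeBlock m θ K p' i))
      = ∑ i, dot2 (ropeBlock m θ Q (p - p') i) (K i) := by
  refine Finset.sum_congr rfl fun i _ => ?_
  simp only [ropeBlock, rot2, dot2]
  have h : (p - p') * θ i = p * θ i - p' * θ i := by ring
  rw [h, Real.cos_sub, Real.sin_sub]
  ring
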